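/- arXiv:1206.6186 — 3 statements merged into one kernel-verified Lean document; each statement's English description precedes it below -/
import Mathlib

section
/- The Wilson–Cowan equation is globally well posed in L²(D): for every initial datum ν₀ ∈ L²(D) there exists a unique continuously differentiable function ν : ℝ≥0 → L²(D) with ν(0) = ν₀ such that τ ν′(t) = −ν(t) + F(ν(t), t) for all t ≥ 0. -/
/-!
The right-hand side `v t g = τ⁻¹ • (-g + F(g, t))` is Lipschitz in `g` uniformly in `t`: by
Cauchy–Schwarz in `y` and Tonelli, the integral operator with kernel `w ∈ L²(D × D)` has norm at
most `‖w‖₂` on `L²(D)`, and `f` is `L`-Lipschitz. It is continuous in `t` since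
`‖F(g, t) - F(g, s)‖ ≤ L ‖I t - I s‖`. For a field that is `K`-Lipschitz in space, Picard–Lindelöf
yields solutions on time intervals of the fixed length `(2K + 1)⁻¹` from any initial state; these
glue to a global solution, which is unique by Gronwall's inequality.
-/

open MeasureTheory Set
open scoped NNReal ENNReal Topology

theorem ContinuousOn.of_dist_le_mul {α β γ : Type*} [TopologicalSpace α] [PseudoMetricSpace β]
    [PseudoMetricSpace γ] {f : α → β} {g : α → γ} {s : Set α} {C : ℝ} (hg : ContinuousOn g s)
    (hfg : ∀ a b, dist (f a) (f b) ≤ C * dist (g a) (g b)) : ContinuousOn f s := by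
  intro t ht
  rw [ContinuousWithinAt, tendsto_iff_dist_tendsto_zero]
  refine squeeze_zero (fun _ => dist_nonneg) (fun s => hfg s t) ?_
  simpa using ((hg t ht).tendsto.dist (tendsto_const_nhds (x := g t))).const_mul C

namespace MeasureTheory

variable {X Y : Type*} [MeasurableSpace X] [MeasurableSpace Y] {μ : Measure X} {ν : Measure Y}

theorem enorm_integral_mul_le_eLpNorm_mul_eLpNorm {a u : Y → ℝ} (ha : AEStronglyMeasurable a ν)
    (hu : AEStronglyMeasurable u ν) :
    ‖∫ y, a y * u y ∂ν‖ₑ ≤ eLpNorm a 2 ν * eLpNorm u 2 ν := calc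
  ‖∫ y, a y * u y ∂ν‖ₑ ≤ eLpNorm (fun y => a y * u y) 1 ν := by
    rw [eLpNorm_one_eq_lintegral_enorm]
    exact enorm_integral_le_lintegral_enorm _
  _ ≤ eLpNorm a 2 ν * eLpNorm u 2 ν := by
    simpa using eLpNorm_le_eLpNorm_mul_eLpNorm'_of_norm (p := 2) (q := 2) ha hu (· * ·) 1
      (.of_forall fun y => by simp [norm_mul])

theorem eLpNorm_two_rpow_two {E : Type*} [NormedAddCommGroup E] (f : Y → E) :
    eLpNorm f 2 ν ^ (2 : ℝ) = ∫⁻ y, ‖f y‖ₑ ^ (2 : ℝ) ∂ν := by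
  simpa using eLpNorm_nnreal_pow_eq_lintegral (μ := ν) (f := f) (p := 2) two_ne_zero

theorem MemLp.prod_right_ae {E : Type*} [NormedAddCommGroup E] [SFinite μ] [SFinite ν]
    {f : X × Y → E} {p : ℝ≥0∞} (hp0 : p ≠ 0) (hp : p ≠ ∞) (hf : MemLp f p (μ.prod ν)) :
    ∀ᵐ x ∂μ, MemLp (fun y => f (x, y)) p ν := by
  filter_upwards [((integrable_norm_rpow_iff hf.1 hp0 hp).2 hf).prod_right_ae,
    hf.1.prodMk_left] with x hx hmeas
  exact (integrable_norm_rpow_iff hmeas hp0 hp).1 hx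

theorem eLpNorm_integral_mul_le [SFinite ν] {w : X → Y → ℝ}
    (hw : AEStronglyMeasurable (fun p : X × Y => w p.1 p.2) (μ.prod ν)) {u : Y → ℝ}
    (hu : MemLp u 2 ν) :
    eLpNorm (fun x => ∫ y, w x y * u y ∂ν) 2 μ ≤
      eLpNorm (fun p : X × Y => w p.1 p.2) 2 (μ.prod ν) * eLpNorm u 2 ν := by
  refine (ENNReal.rpow_le_rpow_iff two_pos).1 ?_
  calc eLpNorm (fun x => ∫ y, w x y * u y ∂ν) 2 μ ^ (2 : ℝ)
      = ∫⁻ x, ‖∫ y, w x y * u y ∂ν‖ₑ ^ (2 : ℝ) ∂μ := eLpNorm_two_rpow_two _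
    _ ≤ ∫⁻ x, eLpNorm (w x) 2 ν ^ (2 : ℝ) * eLpNorm u 2 ν ^ (2 : ℝ) ∂μ := by
      refine lintegral_mono_ae ?_
      filter_upwards [hw.prodMk_left] with x hx
      rw [← ENNReal.mul_rpow_of_nonneg _ _ zero_le_two]
      gcongr
      exact enorm_integral_mul_le_eLpNorm_mul_eLpNorm hx hu.1
    _ = (∫⁻ x, ∫⁻ y, ‖w x y‖ₑ ^ (2 : ℝ) ∂ν ∂μ) * eLpNorm u 2 ν ^ (2 : ℝ) := by
      rw [lintegral_mul_const' _ _ (ENNReal.rpow_ne_top_of_nonneg zero_le_two hu.2.ne)]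
      simp_rw [eLpNorm_two_rpow_two]
    _ = (eLpNorm (fun p : X × Y => w p.1 p.2) 2 (μ.prod ν) * eLpNorm u 2 ν) ^ (2 : ℝ) := by
      rw [ENNReal.mul_rpow_of_nonneg _ _ zero_le_two,
        eLpNorm_two_rpow_two (fun p : X × Y => w p.1 p.2), lintegral_prod _ (hw.enorm.pow_const _)]

theorem lipschitzWith_of_ae_eq_comp_integral_mul_add [SFinite μ] [SFinite ν] {f : ℝ → ℝ}
    {L : ℝ≥0} (hf : LipschitzWith L f) {w : X → Y → ℝ}
    (hw : MemLp (fun p : X × Y => w p.1 p.2) 2 (μ.prod ν)) (ι : X → ℝ)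
    {F : Lp ℝ 2 ν → Lp ℝ 2 μ} (hF : ∀ g, F g =ᵐ[μ] fun x => f (∫ y, w x y * g y ∂ν + ι x)) :
    LipschitzWith (L * (eLpNorm (fun p : X × Y => w p.1 p.2) 2 (μ.prod ν)).toNNReal) F := by
  set A := eLpNorm (fun p : X × Y => w p.1 p.2) 2 (μ.prod ν)
  refine LipschitzWith.of_dist_le_mul fun g h => ?_
  have hsub : ∀ᵐ x ∂μ, (∫ y, w x y * g y ∂ν + ι x) - (∫ y, w x y * h y ∂ν + ι x) =
      ∫ y, w x y * (g - h : Y → ℝ) y ∂ν := by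
    filter_upwards [hw.prod_right_ae two_ne_zero ENNReal.ofNat_ne_top] with x hx
    simp only [Pi.sub_apply, mul_sub]
    rw [integral_sub (f := fun y => w x y * g y) (g := fun y => w x y * h y)
      (hx.integrable_mul (Lp.memLp g)) (hx.integrable_mul (Lp.memLp h))]
    ring
  have key : eLpNorm (⇑(F g) - ⇑(F h)) 2 μ ≤ L * (A * eLpNorm (⇑g - ⇑h) 2 ν) := calc
    eLpNorm (⇑(F g) - ⇑(F h)) 2 μ
        = eLpNorm (fun x => f (∫ y, w x y * g y ∂ν + ι x) - f (∫ y, w x y * h y ∂ν + ι x)) 2 μ :=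
      eLpNorm_congr_ae ((hF g).sub (hF h))
    _ ≤ L * eLpNorm (fun x => ∫ y, w x y * (g - h : Y → ℝ) y ∂ν) 2 μ := by
      refine eLpNorm_le_mul_eLpNorm_of_ae_le_mul' ?_ 2
      filter_upwards [hsub] with x hx
      rw [← hx, ← edist_eq_enorm_sub, ← edist_eq_enorm_sub]
      exact hf.edist_le_mul _ _
    _ ≤ L * (A * eLpNorm (⇑g - ⇑h) 2 ν) := by
      gcongr
      exact eLpNorm_integral_mul_le hw.1 ((Lp.memLp g).sub (Lp.memLp h))
  have hfin : L * (A * eLpNorm (⇑g - ⇑h) 2 ν) ≠ ∞ := by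
    finiteness [hw.2.ne, ((Lp.memLp g).sub (Lp.memLp h)).2.ne]
  rw [Lp.dist_def, Lp.dist_def]
  simpa [ENNReal.toReal_mul, mul_assoc, ENNReal.coe_toNNReal_eq_toReal] using
    ENNReal.toReal_mono hfin key

theorem dist_le_of_ae_eq_comp_add {p : ℝ≥0∞} [Fact (1 ≤ p)] {f : ℝ → ℝ} {L : ℝ≥0}
    (hf : LipschitzWith L f) {a : X → ℝ} {ι₁ ι₂ F₁ F₂ : Lp ℝ p μ}
    (h₁ : F₁ =ᵐ[μ] fun x => f (a x + ι₁ x)) (h₂ : F₂ =ᵐ[μ] fun x => f (a x + ι₂ x)) :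
    dist F₁ F₂ ≤ L * dist ι₁ ι₂ := by
  rw [dist_eq_norm, dist_eq_norm]
  refine Lp.norm_le_mul_norm_of_ae_le_mul ?_
  filter_upwards [Lp.coeFn_sub F₁ F₂, Lp.coeFn_sub ι₁ ι₂, h₁, h₂] with x h₁₂ hι h₁ h₂
  rw [h₁₂, hι, Pi.sub_apply, Pi.sub_apply, h₁, h₂, ← dist_eq_norm, ← dist_eq_norm]
  simpa using hf.dist_le_mul (a x + ι₁ x) (a x + ι₂ x)

end MeasureTheory

namespace IsIntegralCurveOn

variable {E : Type*} [NormedAddCommGroup E] [NormedSpace ℝ E] {v : ℝ → E → E}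
  {γ γ' γ₁ γ₂ : ℝ → E} {s s' : Set ℝ} {K : ℝ≥0} {a b c : ℝ}

theorem congr (h : IsIntegralCurveOn γ v s) (hγ : EqOn γ' γ s) : IsIntegralCurveOn γ' v s :=
  fun t ht => by simpa only [hγ ht] using (h t ht).congr hγ (hγ ht)

theorem union (h : IsIntegralCurveOn γ v s) (h' : IsIntegralCurveOn γ v s') (hs : IsClosed s)
    (hs' : IsClosed s') : IsIntegralCurveOn γ v (s ∪ s') := by
  have hderiv {u : Set ℝ} (hu : IsClosed u) (hγ : IsIntegralCurveOn γ v u) (t : ℝ) :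
      HasDerivWithinAt γ (v t (γ t)) u t := by
    by_cases ht : t ∈ u
    · exact hγ t ht
    · exact HasFDerivWithinAt.of_notMem_closure (by rwa [hu.closure_eq])
  exact fun t _ => (hderiv hs h t).union (hderiv hs' h' t)

theorem piecewise_Icc (h₁ : IsIntegralCurveOn γ₁ v (Icc a b))
    (h₂ : IsIntegralCurveOn γ₂ v (Icc b c)) (hb : γ₁ b = γ₂ b) (hab : a ≤ b) (hbc : b ≤ c) :
    IsIntegralCurveOn (fun t => if t ≤ b then γ₁ t else γ₂ t) v (Icc a c) := by
  rw [← Icc_union_Icc_eq_Icc hab hbc]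
  refine (h₁.congr fun t ht => ?_).union (h₂.congr fun t ht => ?_) isClosed_Icc isClosed_Icc
  · simp [ht.2]
  · rcases ht.1.eq_or_lt with rfl | hlt
    · simp [hb]
    · simp [not_le.2 hlt]

theorem eqOn_Icc_of_lipschitzWith (hv : ∀ t ∈ Ico a b, LipschitzWith K (v t))
    (h₁ : IsIntegralCurveOn γ₁ v (Icc a b)) (h₂ : IsIntegralCurveOn γ₂ v (Icc a b))
    (ha : γ₁ a = γ₂ a) : EqOn γ₁ γ₂ (Icc a b) :=
  have hIci {γ} (hγ : IsIntegralCurveOn γ v (Icc a b)) (t) (ht : t ∈ Ico a b) :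
      HasDerivWithinAt γ (v t (γ t)) (Ici t) t :=
    (hγ t (Ico_subset_Icc_self ht)).mono_of_mem_nhdsWithin (Icc_mem_nhdsGE_of_mem ht)
  ODE_solution_unique_of_mem_Icc_right (s := fun _ => univ)
    (fun t ht => (hv t ht).lipschitzOnWith) h₁.continuousOn (hIci h₁) (fun _ _ => trivial)
    h₂.continuousOn (hIci h₂) (fun _ _ => trivial) ha

end IsIntegralCurveOn

section ExistenceOfIntegralCurves

variable {E : Type*} [NormedAddCommGroup E] [NormedSpace ℝ E] [CompleteSpace E]
  {v : ℝ → E → E} {K : ℝ≥0} {a h : ℝ}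

theorem exists_isIntegralCurveOn_Icc_of_lipschitzWith (hh : 0 ≤ h) (hKh : 2 * K * h ≤ 1)
    (hv : ∀ t ∈ Icc a (a + h), LipschitzWith K (v t))
    (hcont : ∀ x, ContinuousOn (v · x) (Icc a (a + h))) (x₀ : E) :
    ∃ γ, γ a = x₀ ∧ IsIntegralCurveOn γ v (Icc a (a + h)) := by
  obtain ⟨B, hB⟩ := isCompact_Icc.exists_bound_of_continuousOn (hcont 0)
  have hB0 : 0 ≤ B := (norm_nonneg _).trans (hB a ⟨le_rfl, by linarith⟩)
  -- The radius `r` makes the time step `h` independent of `x₀` and `B`: as `2 * K * h ≤ 1`,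
  -- the bound `K * (‖x₀‖ + r) + B` of the field on the ball, times `h`, is at most `r`.
  set r : ℝ := ‖x₀‖ + 2 * B * h
  have hr : 0 ≤ r := by positivity
  have hbound : ∀ t ∈ Icc a (a + h), ∀ x ∈ Metric.closedBall x₀ r,
      ‖v t x‖ ≤ K * (‖x₀‖ + r) + B := fun t ht x hx => calc
    ‖v t x‖ ≤ ‖v t x - v t 0‖ + ‖v t 0‖ := norm_le_norm_sub_add _ _
    _ ≤ K * ‖x - 0‖ + B := add_le_add ((hv t ht).norm_sub_le x 0) (hB t ht)
    _ ≤ K * (‖x₀‖ + r) + B := by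
      gcongr
      rw [sub_zero, ← sub_add_cancel x x₀]
      exact (norm_add_le _ _).trans (by rw [← dist_eq_norm]; linarith [Metric.mem_closedBall.1 hx])
  have hpl : IsPicardLindelof v (tmin := a) (tmax := a + h) ⟨a, le_rfl, by linarith⟩ x₀
      ⟨r, hr⟩ 0 (K * (‖x₀‖ + r) + B).toNNReal K := by
    refine ⟨fun t ht => (hv t ht).lipschitzOnWith, fun x _ => hcont x,
      fun t ht x hx => (hbound t ht x hx).trans (Real.le_coe_toNNReal _), ?_⟩
    rw [Real.coe_toNNReal _ (by positivity)]
    simp only [add_sub_cancel_left, sub_self, max_eq_left hh, NNReal.coe_zero, sub_zero]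
    change (K * (‖x₀‖ + r) + B) * h ≤ r
    nlinarith [mul_nonneg (sub_nonneg.2 hKh) (norm_nonneg x₀),
      mul_nonneg (sub_nonneg.2 hKh) (mul_nonneg hB0 hh)]
  exact hpl.exists_eq_forall_mem_Icc_hasDerivWithinAt₀

theorem exists_isIntegralCurveOn_Icc_add_mul_of_lipschitzWith (hh : 0 ≤ h) (hKh : 2 * K * h ≤ 1)
    (hv : ∀ t ∈ Ici a, LipschitzWith K (v t)) (hcont : ∀ x, ContinuousOn (v · x) (Ici a))
    (x₀ : E) (n : ℕ) : ∃ γ, γ a = x₀ ∧ IsIntegralCurveOn γ v (Icc a (a + (n + 1) * h)) := by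
  have hstep (b : ℝ) (hb : a ≤ b) (x : E) :
      ∃ γ, γ b = x ∧ IsIntegralCurveOn γ v (Icc b (b + h)) :=
    have hsub : Icc b (b + h) ⊆ Ici a := fun t ht => hb.trans ht.1
    exists_isIntegralCurveOn_Icc_of_lipschitzWith hh hKh (fun t ht => hv t (hsub ht))
      (fun x => (hcont x).mono hsub) x
  induction n with
  | zero => simpa using hstep a le_rfl x₀
  | succ n ih =>
    obtain ⟨γ₁, hγ₁a, hγ₁⟩ := ih
    set b := a + (n + 1) * h
    have hab : a ≤ b := le_add_of_nonneg_right (by positivity)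
    obtain ⟨γ₂, hγ₂b, hγ₂⟩ := hstep b hab (γ₁ b)
    refine ⟨fun t => if t ≤ b then γ₁ t else γ₂ t, by simp [hab, hγ₁a], ?_⟩
    convert hγ₁.piecewise_Icc hγ₂ hγ₂b.symm hab (by linarith) using 2
    push_cast
    ring

theorem exists_isIntegralCurveOn_Ici_of_lipschitzWith (hv : ∀ t ∈ Ici a, LipschitzWith K (v t))
    (hcont : ∀ x, ContinuousOn (v · x) (Ici a)) (x₀ : E) :
    ∃ γ, γ a = x₀ ∧ IsIntegralCurveOn γ v (Ici a) := by
  set h : ℝ := (2 * K + 1)⁻¹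
  have hh : 0 < h := by positivity
  have hKh : 2 * K * h ≤ 1 := by
    rw [← div_eq_mul_inv, div_le_one (by positivity)]
    linarith
  choose γ hγa hγ using exists_isIntegralCurveOn_Icc_add_mul_of_lipschitzWith hh.le hKh hv hcont x₀
  have hagree (m n : ℕ) (t : ℝ) (hm : t ∈ Icc a (a + (m + 1) * h))
      (hn : t ∈ Icc a (a + (n + 1) * h)) : γ m t = γ n t :=
    IsIntegralCurveOn.eqOn_Icc_of_lipschitzWith (fun s hs => hv s hs.1)
      ((hγ m).mono (Icc_subset_Icc_right hm.2)) ((hγ n).mono (Icc_subset_Icc_right hn.2))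
      ((hγa m).trans (hγa n).symm) ⟨hm.1, le_rfl⟩
  have hN (t : ℝ) : ∃ n : ℕ, t < a + (n + 1) * h := by
    obtain ⟨n, hn⟩ := exists_nat_gt ((t - a) / h)
    refine ⟨n, ?_⟩
    rw [div_lt_iff₀ hh] at hn
    linarith
  choose N hN using hN
  refine ⟨fun t => γ (N t) t, hγa _, fun t ht => ?_⟩
  have hmem : Icc a (a + (N t + 1) * h) ∈ 𝓝[Ici a] t := by
    rw [← Ici_inter_Iic]
    exact inter_mem_nhdsWithin _ (Iic_mem_nhds (hN t))
  refine (hγ (N t) t ⟨ht, (hN t).le⟩).mono_of_mem_nhdsWithin hmem |>.congr_of_eventuallyEq ?_ rfl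
  filter_upwards [hmem] with s hs using hagree _ _ s ⟨hs.1, (hN s).le⟩ hs

end ExistenceOfIntegralCurves

theorem ContinuousOn.comp_of_lipschitzWith {α E : Type*} [TopologicalSpace α]
    [PseudoMetricSpace E] {v : α → E → E} {K : ℝ≥0} {s : Set α} {γ : α → E}
    (hv : ∀ t ∈ s, LipschitzWith K (v t)) (hcont : ∀ x, ContinuousOn (v · x) s)
    (hγ : ContinuousOn γ s) : ContinuousOn (fun t => v t (γ t)) s :=
  (continuousOn_prod_of_continuousOn_lipschitzOnWith' (Function.uncurry v) K
    (fun t ht => (hv t ht).lipschitzOnWith (s := univ)) (fun x _ => hcont x)).comp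
    (continuousOn_id.prodMk hγ) fun _ ht => ⟨ht, trivial⟩

theorem wilson_cowan_well_posed_general
    {d : ℕ} (D : Set (EuclideanSpace ℝ (Fin d)))
    (f : ℝ → ℝ) (L : ℝ≥0) (hfLip : LipschitzWith L f)
    (w : EuclideanSpace ℝ (Fin d) → EuclideanSpace ℝ (Fin d) → ℝ)
    (hw : MemLp (fun p : EuclideanSpace ℝ (Fin d) × EuclideanSpace ℝ (Fin d) => w p.1 p.2) 2
      ((volume.restrict D).prod (volume.restrict D)))
    (I : ℝ → Lp ℝ 2 (volume.restrict D)) (hI : ContinuousOn I (Set.Ici 0))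
    (F : Lp ℝ 2 (volume.restrict D) → ℝ → Lp ℝ 2 (volume.restrict D))
    (hF : ∀ (g : Lp ℝ 2 (volume.restrict D)) (t : ℝ),
      (F g t : EuclideanSpace ℝ (Fin d) → ℝ) =ᵐ[volume.restrict D]
        fun x => f ((∫ y in D, w x y * g y) + I t x))
    (τ : ℝ)
    (ν₀ : Lp ℝ 2 (volume.restrict D)) :
    ∃ ν : ℝ → Lp ℝ 2 (volume.restrict D),
      ν 0 = ν₀ ∧
      (∀ t ∈ Set.Ici (0 : ℝ),
        HasDerivWithinAt ν (τ⁻¹ • (-ν t + F (ν t) t)) (Set.Ici 0) t) ∧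
      ContinuousOn (fun t => τ⁻¹ • (-ν t + F (ν t) t)) (Set.Ici 0) ∧
      (∀ ν' : ℝ → Lp ℝ 2 (volume.restrict D), ν' 0 = ν₀ →
        (∀ t ∈ Set.Ici (0 : ℝ),
          HasDerivWithinAt ν' (τ⁻¹ • (-ν' t + F (ν' t) t)) (Set.Ici 0) t) →
        ∀ t ∈ Set.Ici (0 : ℝ), ν' t = ν t) := by
  set K := L * (eLpNorm (fun p : EuclideanSpace ℝ (Fin d) × EuclideanSpace ℝ (Fin d) => w p.1 p.2)
    2 ((volume.restrict D).prod (volume.restrict D))).toNNReal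
  have hFLip (t : ℝ) : LipschitzWith K (F · t) :=
    lipschitzWith_of_ae_eq_comp_integral_mul_add hfLip hw (I t) fun g => hF g t
  have hFcont (g) : ContinuousOn (F g ·) (Ici 0) :=
    hI.of_dist_le_mul fun t s => dist_le_of_ae_eq_comp_add hfLip (hF g t) (hF g s)
  set v : ℝ → Lp ℝ 2 (volume.restrict D) → Lp ℝ 2 (volume.restrict D) :=
    fun t g => τ⁻¹ • (-g + F g t)
  have hvLip : ∀ t ∈ Ici (0 : ℝ), LipschitzWith (‖τ⁻¹‖₊ * (1 + K)) (v t) := fun t _ =>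
    (lipschitzWith_smul τ⁻¹).comp (LipschitzWith.id.neg.add (hFLip t))
  have hvcont (g) : ContinuousOn (v · g) (Ici 0) :=
    (continuousOn_const.neg.add (hFcont g)).const_smul τ⁻¹
  obtain ⟨ν, hν0, hν⟩ := exists_isIntegralCurveOn_Ici_of_lipschitzWith hvLip hvcont ν₀
  refine ⟨ν, hν0, hν, hν.continuousOn.comp_of_lipschitzWith (v := v) hvLip hvcont,
    fun ν' hν'0 hν' t ht => ?_⟩
  exact IsIntegralCurveOn.eqOn_Icc_of_lipschitzWith (fun s hs => hvLip s hs.1)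
    (IsIntegralCurveOn.mono (v := v) hν' Icc_subset_Ici_self)
    (hν.mono Icc_subset_Ici_self) (hν'0.trans hν0.symm) ⟨ht, le_rfl⟩

/-- Global well-posedness of the Wilson–Cowan equation in `L²(D)`:
for every initial datum `ν₀ ∈ L²(D)` there is a unique continuously differentiable
`ν : ℝ≥0 → L²(D)` with `ν 0 = ν₀` and `τ ν'(t) = −ν(t) + F(ν(t), t)` for all `t ≥ 0`. -/
theorem wilson_cowan_well_posed
    {d : ℕ} (D : Set (EuclideanSpace ℝ (Fin d)))
    (hDmeas : MeasurableSet D) (hDbdd : Bornology.IsBounded D)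
    (f : ℝ → ℝ) (L : ℝ≥0) (hfLip : LipschitzWith L f)
    (M : ℝ) (hfBdd : ∀ z : ℝ, |f z| ≤ M)
    (w : EuclideanSpace ℝ (Fin d) → EuclideanSpace ℝ (Fin d) → ℝ)
    (hw : MemLp (fun p : EuclideanSpace ℝ (Fin d) × EuclideanSpace ℝ (Fin d) => w p.1 p.2) 2
      ((volume.restrict D).prod (volume.restrict D)))
    (I : ℝ → Lp ℝ 2 (volume.restrict D)) (hI : ContinuousOn I (Set.Ici 0))
    (F : Lp ℝ 2 (volume.restrict D) → ℝ → Lp ℝ 2 (volume.restrict D))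
    (hF : ∀ (g : Lp ℝ 2 (volume.restrict D)) (t : ℝ),
      (F g t : EuclideanSpace ℝ (Fin d) → ℝ) =ᵐ[volume.restrict D]
        fun x => f ((∫ y in D, w x y * g y) + I t x))
    (τ : ℝ) (hτ : 0 < τ)
    (ν₀ : Lp ℝ 2 (volume.restrict D)) :
    ∃ ν : ℝ → Lp ℝ 2 (volume.restrict D),
      ν 0 = ν₀ ∧
      (∀ t ∈ Set.Ici (0 : ℝ),
        HasDerivWithinAt ν (τ⁻¹ • (-ν t + F (ν t) t)) (Set.Ici 0) t) ∧
      ContinuousOn (fun t => τ⁻¹ • (-ν t + F (ν t) t)) (Set.Ici 0) ∧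
      (∀ ν' : ℝ → Lp ℝ 2 (volume.restrict D), ν' 0 = ν₀ →
        (∀ t ∈ Set.Ici (0 : ℝ),
          HasDerivWithinAt ν' (τ⁻¹ • (-ν' t + F (ν' t) t)) (Set.Ici 0) t) →
        ∀ t ∈ Set.Ici (0 : ℝ), ν' t = ν t) :=
  wilson_cowan_well_posed_general D f L hfLip w hw I hI F hF τ ν₀
end

section
/- Invariance of the physiological range: assume in addition that f is nonnegative, and let ν be the solution of the Wilson–Cowan equation with initial datum ν₀ ∈ L²(D) satisfying 0 ≤ ν₀(x) ≤ ‖f‖₀ for almost all x ∈ D. Then for every t ≥ 0 one has 0 ≤ ν(t)(x) ≤ ‖f‖₀ for almost all x ∈ D. If moreover 0 < f(z) < ‖f‖₀ for all z ∈ ℝ, then for every t > 0 one has 0 < ν(t)(x) < ‖f‖₀ for almost all x ∈ D. -/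
open MeasureTheory Set
open scoped NNReal ENNReal RealInnerProductSpace

/-!
The equation is a relaxation `ν' = τ⁻¹ (-ν + G)` towards the forcing `G(t) = F(ν(t), t)`, whose
values lie in `[0, ‖f‖₀]` (in `(0, ‖f‖₀)` in the strict case). Integrating over a measurable set
`A` gives the scalar equation `ψ' = τ⁻¹ (-ψ + c)` for `ψ(t) = ∫_A ν(t)`, and `e^{t/τ} ψ(t)` has
derivative `τ⁻¹ e^{t/τ} c(t)`, so it is nondecreasing while `c ≥ 0`. Hence `∫_A ν(t) ≥ 0` for
every `A`, i.e. `ν(t) ≥ 0` a.e. In the strict case `c > 0` whenever `A` has positive measure, so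
`A = {ν(t) ≤ 0}` must be null. The upper bounds follow by applying this to `‖f‖₀ - ν`.
-/

section ScalarRelaxation

variable {k : ℝ} {ψ c : ℝ → ℝ}

theorem HasDerivWithinAt.exp_mul_of_relaxation {S : Set ℝ} {s : ℝ}
    (hψ : HasDerivWithinAt ψ (k * (-ψ s + c s)) S s) :
    HasDerivWithinAt (fun s => Real.exp (k * s) * ψ s) (Real.exp (k * s) * (k * c s)) S s := by
  have hexp : HasDerivWithinAt (fun s => Real.exp (k * s)) (Real.exp (k * s) * k) S s :=
    ((hasDerivAt_id s).const_mul k).exp.hasDerivWithinAt.congr_deriv (by simp)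
  exact (hexp.mul hψ).congr_deriv (by ring)

variable (hψ : ∀ s ∈ Ici (0 : ℝ), HasDerivWithinAt ψ (k * (-ψ s + c s)) (Ici 0) s)
include hψ

theorem continuousOn_exp_mul_of_relaxation :
    ContinuousOn (fun s => Real.exp (k * s) * ψ s) (Ici 0) := fun s hs =>
  (hψ s hs).exp_mul_of_relaxation.continuousWithinAt

theorem hasDerivWithinAt_interior_exp_mul_of_relaxation :
    ∀ s ∈ interior (Ici (0 : ℝ)), HasDerivWithinAt (fun s => Real.exp (k * s) * ψ s)
      (Real.exp (k * s) * (k * c s)) (interior (Ici 0)) s := fun s hs =>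
  ((hψ s (interior_subset hs)).mono interior_subset).exp_mul_of_relaxation

theorem nonneg_of_relaxation (hk : 0 ≤ k) (hc : ∀ s ∈ Ioi (0 : ℝ), 0 ≤ c s) (h0 : 0 ≤ ψ 0)
    {t : ℝ} (ht : t ∈ Ici (0 : ℝ)) : 0 ≤ ψ t := by
  have hmono : MonotoneOn (fun s => Real.exp (k * s) * ψ s) (Ici 0) :=
    monotoneOn_of_hasDerivWithinAt_nonneg (convex_Ici 0) (continuousOn_exp_mul_of_relaxation hψ)
      (hasDerivWithinAt_interior_exp_mul_of_relaxation hψ) fun s hs => by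
        have := hc s (interior_Ici (a := (0 : ℝ)) ▸ hs)
        positivity
  have h := hmono self_mem_Ici ht ht
  simp only [mul_zero, Real.exp_zero, one_mul] at h
  exact nonneg_of_mul_nonneg_right (h0.trans h) (Real.exp_pos _)

theorem pos_of_relaxation (hk : 0 < k) (hc : ∀ s ∈ Ioi (0 : ℝ), 0 < c s) (h0 : 0 ≤ ψ 0)
    {t : ℝ} (ht : 0 < t) : 0 < ψ t := by
  have hmono : StrictMonoOn (fun s => Real.exp (k * s) * ψ s) (Ici 0) :=
    strictMonoOn_of_hasDerivWithinAt_pos (convex_Ici 0) (continuousOn_exp_mul_of_relaxation hψ)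
      (hasDerivWithinAt_interior_exp_mul_of_relaxation hψ) fun s hs => by
        have := hc s (interior_Ici (a := (0 : ℝ)) ▸ hs)
        positivity
  have h := hmono self_mem_Ici ht.le ht
  simp only [mul_zero, Real.exp_zero, one_mul] at h
  exact pos_of_mul_pos_right (h0.trans_lt h) (Real.exp_pos _).le

end ScalarRelaxation

theorem hasDerivWithinAt_const_sub_of_relaxation {E : Type*} [NormedAddCommGroup E]
    [NormedSpace ℝ E] {k : ℝ} {u G : ℝ → E}
    (hu : ∀ s ∈ Ici (0 : ℝ), HasDerivWithinAt u (k • (-u s + G s)) (Ici 0) s) (C : E) :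
    ∀ s ∈ Ici (0 : ℝ),
      HasDerivWithinAt (fun s => C - u s) (k • (-(C - u s) + (C - G s))) (Ici 0) s :=
  fun s hs => ((hu s hs).const_sub C).congr_deriv (by module)

theorem setIntegral_pos_of_ae_pos {α : Type*} [MeasurableSpace α] {μ : Measure α} {A : Set α}
    {g : α → ℝ} (hA : μ A ≠ 0) (hg : IntegrableOn g A μ) (hpos : ∀ᵐ x ∂μ, 0 < g x) :
    0 < ∫ x in A, g x ∂μ := by
  have hsupp : Function.support g =ᵐ[μ.restrict A] univ :=
    Filter.eventuallyEq_univ.2 (ae_restrict_of_ae (hpos.mono fun _ hx => hx.ne'))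
  rw [integral_pos_iff_support_of_nonneg_ae (ae_restrict_of_ae (hpos.mono fun x hx => hx.le)) hg,
    measure_congr hsupp, Measure.restrict_apply_univ]
  exact pos_iff_ne_zero.2 hA

namespace MeasureTheory.Lp

variable {α : Type*} [MeasurableSpace α] {μ : Measure α} [IsFiniteMeasure μ]

theorem coeFn_const_sub {p : ℝ≥0∞} (c : ℝ) (g : Lp ℝ p μ) :
    ⇑(Lp.const p μ c - g) =ᵐ[μ] fun x => c - g x := by
  filter_upwards [Lp.coeFn_sub (Lp.const p μ c) g, Lp.coeFn_const (p := p) (μ := μ) c]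
    with x hsub hconst
  rw [hsub, Pi.sub_apply, hconst, Function.const_apply]

theorem ae_const_sub_iff {p : ℝ≥0∞} {P : ℝ → Prop} (c : ℝ) (g : Lp ℝ p μ) :
    (∀ᵐ x ∂μ, P ((Lp.const p μ c - g) x)) ↔ ∀ᵐ x ∂μ, P (c - g x) :=
  Filter.eventually_congr ((coeFn_const_sub c g).mono fun _ hx => by rw [hx])

variable {k : ℝ} {u G : ℝ → Lp ℝ 2 μ}

theorem hasDerivWithinAt_setIntegral_of_relaxation
    (hu : ∀ s ∈ Ici (0 : ℝ), HasDerivWithinAt u (k • (-u s + G s)) (Ici 0) s)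
    {A : Set α} (hA : MeasurableSet A) {s : ℝ} (hs : s ∈ Ici (0 : ℝ)) :
    HasDerivWithinAt (fun s => ∫ x in A, u s x ∂μ)
      (k * (-(∫ x in A, u s x ∂μ) + ∫ x in A, G s x ∂μ)) (Ici 0) s := by
  set χ : Lp ℝ 2 μ := indicatorConstLp 2 hA (measure_ne_top μ A) 1
  have hχ : ∀ g : Lp ℝ 2 μ, ⟪χ, g⟫ = ∫ x in A, g x ∂μ := L2.inner_indicatorConstLp_one hA _
  simp only [← hχ]
  exact ((innerSL ℝ χ).hasFDerivAt.comp_hasDerivWithinAt s (hu s hs)).congr_deriv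
    (by simp only [innerSL_apply_apply, inner_smul_right, inner_add_right, inner_neg_right,
      mul_add, mul_neg])

theorem ae_nonneg_of_relaxation (hk : 0 ≤ k)
    (hu : ∀ s ∈ Ici (0 : ℝ), HasDerivWithinAt u (k • (-u s + G s)) (Ici 0) s)
    (hG : ∀ s ∈ Ioi (0 : ℝ), ∀ᵐ x ∂μ, 0 ≤ G s x) (h0 : ∀ᵐ x ∂μ, 0 ≤ u 0 x)
    {t : ℝ} (ht : t ∈ Ici (0 : ℝ)) : ∀ᵐ x ∂μ, 0 ≤ u t x :=
  ae_nonneg_of_forall_setIntegral_nonneg ((Lp.memLp (u t)).integrable one_le_two)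
    fun _ hA _ => nonneg_of_relaxation
      (fun _ hs => hasDerivWithinAt_setIntegral_of_relaxation hu hA hs) hk
      (fun s hs => setIntegral_nonneg_of_ae (hG s hs)) (setIntegral_nonneg_of_ae h0) ht

theorem ae_pos_of_relaxation (hk : 0 < k)
    (hu : ∀ s ∈ Ici (0 : ℝ), HasDerivWithinAt u (k • (-u s + G s)) (Ici 0) s)
    (hG : ∀ s ∈ Ioi (0 : ℝ), ∀ᵐ x ∂μ, 0 < G s x) (h0 : ∀ᵐ x ∂μ, 0 ≤ u 0 x)
    {t : ℝ} (ht : 0 < t) : ∀ᵐ x ∂μ, 0 < u t x := by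
  set A := {x | u t x ≤ 0}
  have hA : MeasurableSet A :=
    (Lp.stronglyMeasurable (u t)).measurableSet_le stronglyMeasurable_const
  suffices μ A = 0 from (measure_eq_zero_iff_ae_notMem.1 this).mono fun _ hx => not_le.1 hx
  by_contra hApos
  have hpos : 0 < ∫ x in A, u t x ∂μ := pos_of_relaxation
    (fun _ hs => hasDerivWithinAt_setIntegral_of_relaxation hu hA hs) hk
    (fun s hs => setIntegral_pos_of_ae_pos hApos
      ((Lp.memLp (G s)).integrable one_le_two).integrableOn (hG s hs))
    (setIntegral_nonneg_of_ae h0) ht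
  exact hpos.not_ge (setIntegral_nonpos hA fun _ hx => hx)

theorem ae_le_of_relaxation (hk : 0 ≤ k)
    (hu : ∀ s ∈ Ici (0 : ℝ), HasDerivWithinAt u (k • (-u s + G s)) (Ici 0) s) {c : ℝ}
    (hG : ∀ s ∈ Ioi (0 : ℝ), ∀ᵐ x ∂μ, G s x ≤ c) (h0 : ∀ᵐ x ∂μ, u 0 x ≤ c)
    {t : ℝ} (ht : t ∈ Ici (0 : ℝ)) : ∀ᵐ x ∂μ, u t x ≤ c := by
  have key := ae_nonneg_of_relaxation hk
    (hasDerivWithinAt_const_sub_of_relaxation hu (Lp.const 2 μ c))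
    (fun s hs => (ae_const_sub_iff (P := (0 ≤ ·)) c (G s)).2 ((hG s hs).mono fun _ => sub_nonneg.2))
    ((ae_const_sub_iff (P := (0 ≤ ·)) c (u 0)).2 (h0.mono fun _ => sub_nonneg.2)) ht
  exact ((ae_const_sub_iff (P := (0 ≤ ·)) c (u t)).1 key).mono fun _ => sub_nonneg.1

theorem ae_lt_of_relaxation (hk : 0 < k)
    (hu : ∀ s ∈ Ici (0 : ℝ), HasDerivWithinAt u (k • (-u s + G s)) (Ici 0) s) {c : ℝ}
    (hG : ∀ s ∈ Ioi (0 : ℝ), ∀ᵐ x ∂μ, G s x < c) (h0 : ∀ᵐ x ∂μ, u 0 x ≤ c)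
    {t : ℝ} (ht : 0 < t) : ∀ᵐ x ∂μ, u t x < c := by
  have key := ae_pos_of_relaxation hk
    (hasDerivWithinAt_const_sub_of_relaxation hu (Lp.const 2 μ c))
    (fun s hs => (ae_const_sub_iff (P := (0 < ·)) c (G s)).2 ((hG s hs).mono fun _ => sub_pos.2))
    ((ae_const_sub_iff (P := (0 ≤ ·)) c (u 0)).2 (h0.mono fun _ => sub_nonneg.2)) ht
  exact ((ae_const_sub_iff (P := (0 < ·)) c (u t)).1 key).mono fun _ => sub_pos.1

end MeasureTheory.Lp

theorem wilson_cowan_invariance_general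
    {d : ℕ} (D : Set (EuclideanSpace ℝ (Fin d)))
    (hDbdd : Bornology.IsBounded D)
    (f : ℝ → ℝ)
    (M : ℝ) (hfBdd : ∀ z : ℝ, |f z| ≤ M)
    (hfNonneg : ∀ z : ℝ, 0 ≤ f z)
    (w : EuclideanSpace ℝ (Fin d) → EuclideanSpace ℝ (Fin d) → ℝ)
    (I : ℝ → Lp ℝ 2 (volume.restrict D))
    (F : Lp ℝ 2 (volume.restrict D) → ℝ → Lp ℝ 2 (volume.restrict D))
    (hF : ∀ (g : Lp ℝ 2 (volume.restrict D)) (t : ℝ),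
      (F g t : EuclideanSpace ℝ (Fin d) → ℝ) =ᵐ[volume.restrict D]
        fun x => f ((∫ y in D, w x y * g y) + I t x))
    (τ : ℝ) (hτ : 0 < τ)
    (ν : ℝ → Lp ℝ 2 (volume.restrict D))
    (hν : ∀ t ∈ Set.Ici (0 : ℝ),
      HasDerivWithinAt ν (τ⁻¹ • (-ν t + F (ν t) t)) (Set.Ici 0) t)
    (hν₀ : ∀ᵐ x ∂(volume.restrict D), 0 ≤ ν 0 x ∧ ν 0 x ≤ M) :
    (∀ t ∈ Set.Ici (0 : ℝ),
      ∀ᵐ x ∂(volume.restrict D), 0 ≤ ν t x ∧ ν t x ≤ M) ∧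
    ((∀ z : ℝ, 0 < f z ∧ f z < M) →
      ∀ t : ℝ, 0 < t →
        ∀ᵐ x ∂(volume.restrict D), 0 < ν t x ∧ ν t x < M) := by
  have : IsFiniteMeasure (volume.restrict D) :=
    isFiniteMeasure_restrict.2 hDbdd.measure_lt_top.ne
  have hk : 0 < τ⁻¹ := inv_pos.2 hτ
  have hforcing (P : ℝ → Prop) (hP : ∀ z, P (f z)) (s : ℝ) :
      ∀ᵐ x ∂(volume.restrict D), P (F (ν s) s x) :=
    (hF (ν s) s).mono fun x hx => hx ▸ hP _
  refine ⟨fun t ht => ?_, fun hf t ht => ?_⟩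
  · filter_upwards [Lp.ae_nonneg_of_relaxation hk.le hν (fun s _ => hforcing (0 ≤ ·) hfNonneg s)
        (hν₀.mono fun _ h => h.1) ht,
      Lp.ae_le_of_relaxation hk.le hν
        (fun s _ => hforcing (· ≤ M) (fun z => (le_abs_self _).trans (hfBdd z)) s)
        (hν₀.mono fun _ h => h.2) ht] with x hlow hup
    exact ⟨hlow, hup⟩
  · filter_upwards [Lp.ae_pos_of_relaxation hk hν
        (fun s _ => hforcing (0 < ·) (fun z => (hf z).1) s)
        (hν₀.mono fun _ h => h.1) ht,
      Lp.ae_lt_of_relaxation hk hν (fun s _ => hforcing (· < M) (fun z => (hf z).2) s)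
        (hν₀.mono fun _ h => h.2) ht] with x hlow hup
    exact ⟨hlow, hup⟩

/-- Invariance of the physiological range for the Wilson–Cowan equation:
if `f ≥ 0` and `0 ≤ ν₀ ≤ ‖f‖₀` a.e., then `0 ≤ ν(t) ≤ ‖f‖₀` a.e. for all `t ≥ 0`;
if moreover `0 < f(z) < ‖f‖₀` for all `z`, then `0 < ν(t) < ‖f‖₀` a.e. for all `t > 0`. -/
theorem wilson_cowan_invariance
    {d : ℕ} (D : Set (EuclideanSpace ℝ (Fin d)))
    (hDmeas : MeasurableSet D) (hDbdd : Bornology.IsBounded D)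
    (f : ℝ → ℝ) (L : ℝ≥0) (hfLip : LipschitzWith L f)
    (M : ℝ) (hfBdd : ∀ z : ℝ, |f z| ≤ M) (hM : M = ⨆ z : ℝ, |f z|)
    (hfNonneg : ∀ z : ℝ, 0 ≤ f z)
    (w : EuclideanSpace ℝ (Fin d) → EuclideanSpace ℝ (Fin d) → ℝ)
    (hw : MemLp (fun p : EuclideanSpace ℝ (Fin d) × EuclideanSpace ℝ (Fin d) => w p.1 p.2) 2
      ((volume.restrict D).prod (volume.restrict D)))
    (I : ℝ → Lp ℝ 2 (volume.restrict D)) (hI : ContinuousOn I (Set.Ici 0))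
    (F : Lp ℝ 2 (volume.restrict D) → ℝ → Lp ℝ 2 (volume.restrict D))
    (hF : ∀ (g : Lp ℝ 2 (volume.restrict D)) (t : ℝ),
      (F g t : EuclideanSpace ℝ (Fin d) → ℝ) =ᵐ[volume.restrict D]
        fun x => f ((∫ y in D, w x y * g y) + I t x))
    (τ : ℝ) (hτ : 0 < τ)
    (ν : ℝ → Lp ℝ 2 (volume.restrict D))
    (hν : ∀ t ∈ Set.Ici (0 : ℝ),
      HasDerivWithinAt ν (τ⁻¹ • (-ν t + F (ν t) t)) (Set.Ici 0) t)
    (hν₀ : ∀ᵐ x ∂(volume.restrict D), 0 ≤ ν 0 x ∧ ν 0 x ≤ M) :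
    (∀ t ∈ Set.Ici (0 : ℝ),
      ∀ᵐ x ∂(volume.restrict D), 0 ≤ ν t x ∧ ν t x ≤ M) ∧
    ((∀ z : ℝ, 0 < f z ∧ f z < M) →
      ∀ t : ℝ, 0 < t →
        ∀ᵐ x ∂(volume.restrict D), 0 < ν t x ∧ ν t x < M) :=
  wilson_cowan_invariance_general D hDbdd f M hfBdd hfNonneg w I F hF τ hτ ν hν hν₀
end

section
/- Global a priori bound in L²: the solution ν of the Wilson–Cowan equation with initial datum ν₀ ∈ L²(D) satisfies, for every t ≥ 0, ‖ν(t)‖_{L²(D)} ≤ e^{−t/τ} ‖ν₀‖_{L²(D)} + (1 − e^{−t/τ}) ‖f‖₀ |D|^{1/2}; in particular sup_{t≥0} ‖ν(t)‖_{L²(D)} ≤ max(‖ν₀‖_{L²(D)}, ‖f‖₀ |D|^{1/2}), where |D| denotes the Lebesgue measure of D. -/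
/-!
Multiplying by the integrating factor `e^{t/τ}` turns the equation into
`τ (e^{t/τ} ν)' = e^{t/τ} F(ν, t)`, and `‖F(g, t)‖ ≤ ‖f‖₀ |D|^{1/2}` for every `g` because `f` is
bounded. The mean value inequality then bounds `‖e^{t/τ} ν(t)‖` by `‖ν₀‖ + (e^{t/τ} - 1) ‖f‖₀ |D|^{1/2}`,
which is the estimate after division by `e^{t/τ}`; the second bound holds because the right-hand
side is a convex combination of `‖ν₀‖` and `‖f‖₀ |D|^{1/2}`.
-/

open MeasureTheory Set Real
open scoped NNReal ENNReal

theorem MeasureTheory.Lp.norm_two_le_of_ae_bound {α E : Type*} [MeasurableSpace α]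
    [NormedAddCommGroup E] {μ : Measure α} [IsFiniteMeasure μ] {g : Lp E 2 μ} {C : ℝ}
    (hC : 0 ≤ C) (hgC : ∀ᵐ x ∂μ, ‖g x‖ ≤ C) : ‖g‖ ≤ C * √(μ univ).toReal := by
  refine (Lp.norm_le_of_ae_bound hC hgC).trans_eq ?_
  rw [mul_comm, measureUnivNNReal, sqrt_eq_rpow, ENNReal.toReal_ofNat, one_div]
  rfl

section Relaxation

variable {E : Type*} [NormedAddCommGroup E] [NormedSpace ℝ E] {ν G : ℝ → E} {τ C : ℝ}

theorem hasDerivWithinAt_exp_div_smul_of_relaxation {v : E} {s : Set ℝ} {t : ℝ}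
    (h : HasDerivWithinAt ν (τ⁻¹ • (-ν t + v)) s t) :
    HasDerivWithinAt (fun r => exp (r / τ) • ν r) ((exp (t / τ) / τ) • v) s t := by
  have hexp : HasDerivWithinAt (fun r => exp (r / τ)) (exp (t / τ) * τ⁻¹) s t :=
    (((hasDerivAt_id t).div_const τ).exp.hasDerivWithinAt).congr_deriv (by simp [div_eq_mul_inv])
  refine (hexp.smul h).congr_deriv ?_
  rw [smul_add, smul_neg, smul_add, smul_neg, smul_smul, smul_smul, ← div_eq_mul_inv]
  abel

theorem norm_exp_div_smul_le_of_relaxation (hτ : 0 < τ)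
    (hν : ∀ t ∈ Ici 0, HasDerivWithinAt ν (τ⁻¹ • (-ν t + G t)) (Ici 0) t)
    (hG : ∀ t ∈ Ici 0, ‖G t‖ ≤ C) {t : ℝ} (ht : 0 ≤ t) :
    ‖exp (t / τ) • ν t‖ ≤ ‖ν 0‖ + C * (exp (t / τ) - 1) := by
  have hderiv : ∀ s ∈ Ico 0 t,
      HasDerivWithinAt (fun r => exp (r / τ) • ν r) ((exp (s / τ) / τ) • G s) (Ici s) s :=
    fun s hs => hasDerivWithinAt_exp_div_smul_of_relaxation
      ((hν s hs.1).mono (Ici_subset_Ici.2 hs.1))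
  have hcont : ContinuousOn (fun r => exp (r / τ) • ν r) (Icc 0 t) :=
    ((continuous_exp.comp (continuous_id.div_const τ)).continuousOn).smul
      fun s hs => (hν s hs.1).continuousWithinAt.mono Icc_subset_Ici_self
  have hboundary : ∀ s, HasDerivAt (fun r => ‖ν 0‖ + C * (exp (r / τ) - 1))
      (C * (exp (s / τ) / τ)) s := fun s => by
    simpa [div_eq_mul_inv] using
      ((((hasDerivAt_id s).div_const τ).exp.sub_const 1).const_mul C).const_add ‖ν 0‖
  have hnorm : ∀ s ∈ Ico 0 t, ‖(exp (s / τ) / τ) • G s‖ ≤ C * (exp (s / τ) / τ) := fun s hs => by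
    rw [norm_smul, norm_of_nonneg (by positivity), mul_comm]
    exact mul_le_mul_of_nonneg_right (hG s hs.1) (by positivity)
  exact image_norm_le_of_norm_deriv_right_le_deriv_boundary hcont hderiv (by simp) hboundary
    hnorm (right_mem_Icc.2 ht)

theorem norm_le_of_relaxation (hτ : 0 < τ)
    (hν : ∀ t ∈ Ici 0, HasDerivWithinAt ν (τ⁻¹ • (-ν t + G t)) (Ici 0) t)
    (hG : ∀ t ∈ Ici 0, ‖G t‖ ≤ C) {t : ℝ} (ht : 0 ≤ t) :
    ‖ν t‖ ≤ exp (-t / τ) * ‖ν 0‖ + (1 - exp (-t / τ)) * C := by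
  have h := norm_exp_div_smul_le_of_relaxation hτ hν hG ht
  rw [norm_smul, norm_of_nonneg (exp_pos _).le, ← le_div_iff₀' (exp_pos _)] at h
  refine h.trans_eq ?_
  rw [neg_div, exp_neg]
  field_simp

end Relaxation

theorem wilson_cowan_a_priori_bound_general
    {d : ℕ} (D : Set (EuclideanSpace ℝ (Fin d)))
    (hDbdd : Bornology.IsBounded D)
    (f : ℝ → ℝ)
    (M : ℝ) (hfBdd : ∀ z : ℝ, |f z| ≤ M)
    (w : EuclideanSpace ℝ (Fin d) → EuclideanSpace ℝ (Fin d) → ℝ)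
    (I : ℝ → Lp ℝ 2 (volume.restrict D))
    (F : Lp ℝ 2 (volume.restrict D) → ℝ → Lp ℝ 2 (volume.restrict D))
    (hF : ∀ (g : Lp ℝ 2 (volume.restrict D)) (t : ℝ),
      (F g t : EuclideanSpace ℝ (Fin d) → ℝ) =ᵐ[volume.restrict D]
        fun x => f ((∫ y in D, w x y * g y) + I t x))
    (τ : ℝ) (hτ : 0 < τ)
    (ν : ℝ → Lp ℝ 2 (volume.restrict D))
    (hν : ∀ t ∈ Set.Ici (0 : ℝ),
      HasDerivWithinAt ν (τ⁻¹ • (-ν t + F (ν t) t)) (Set.Ici 0) t) :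
    (∀ t ∈ Set.Ici (0 : ℝ),
      ‖ν t‖ ≤ Real.exp (-t / τ) * ‖ν 0‖ +
        (1 - Real.exp (-t / τ)) * M * Real.sqrt (volume D).toReal) ∧
    (∀ t ∈ Set.Ici (0 : ℝ),
      ‖ν t‖ ≤ max ‖ν 0‖ (M * Real.sqrt (volume D).toReal)) := by
  have : IsFiniteMeasure (volume.restrict D) := isFiniteMeasure_restrict.2 hDbdd.measure_lt_top.ne
  have hFbound (g : Lp ℝ 2 (volume.restrict D)) (t : ℝ) : ‖F g t‖ ≤ M * √(volume D).toReal := by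
    have hae : ∀ᵐ x ∂volume.restrict D, ‖F g t x‖ ≤ M := by
      filter_upwards [hF g t] with x hx
      exact hx ▸ hfBdd _
    simpa using Lp.norm_two_le_of_ae_bound ((abs_nonneg _).trans (hfBdd 0)) hae
  have hbound (t : ℝ) (ht : t ∈ Ici 0) :=
    norm_le_of_relaxation hτ hν (fun s _ => hFbound (ν s) s) ht
  refine ⟨fun t ht => (hbound t ht).trans_eq (by ring), fun t ht => (hbound t ht).trans ?_⟩
  have hdecay : exp (-t / τ) ≤ 1 := exp_le_one_iff.2 (div_nonpos_of_nonpos_of_nonneg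
    (neg_nonpos.2 ht) hτ.le)
  exact Convex.combo_le_max _ _ (exp_pos _).le (sub_nonneg.2 hdecay) (add_sub_cancel _ _)

/-- Global a priori bound in `L²`: the solution of the Wilson–Cowan
equation satisfies `‖ν(t)‖ ≤ e^{−t/τ}‖ν₀‖ + (1 − e^{−t/τ})‖f‖₀ |D|^{1/2}` for all `t ≥ 0`;
in particular `‖ν(t)‖ ≤ max(‖ν₀‖, ‖f‖₀ |D|^{1/2})` for all `t ≥ 0`. -/
theorem wilson_cowan_a_priori_bound
    {d : ℕ} (D : Set (EuclideanSpace ℝ (Fin d)))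
    (hDmeas : MeasurableSet D) (hDbdd : Bornology.IsBounded D)
    (f : ℝ → ℝ) (L : ℝ≥0) (hfLip : LipschitzWith L f)
    (M : ℝ) (hfBdd : ∀ z : ℝ, |f z| ≤ M) (hM : M = ⨆ z : ℝ, |f z|)
    (w : EuclideanSpace ℝ (Fin d) → EuclideanSpace ℝ (Fin d) → ℝ)
    (hw : MemLp (fun p : EuclideanSpace ℝ (Fin d) × EuclideanSpace ℝ (Fin d) => w p.1 p.2) 2
      ((volume.restrict D).prod (volume.restrict D)))
    (I : ℝ → Lp ℝ 2 (volume.restrict D)) (hI : ContinuousOn I (Set.Ici 0))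
    (F : Lp ℝ 2 (volume.restrict D) → ℝ → Lp ℝ 2 (volume.restrict D))
    (hF : ∀ (g : Lp ℝ 2 (volume.restrict D)) (t : ℝ),
      (F g t : EuclideanSpace ℝ (Fin d) → ℝ) =ᵐ[volume.restrict D]
        fun x => f ((∫ y in D, w x y * g y) + I t x))
    (τ : ℝ) (hτ : 0 < τ)
    (ν : ℝ → Lp ℝ 2 (volume.restrict D))
    (hν : ∀ t ∈ Set.Ici (0 : ℝ),
      HasDerivWithinAt ν (τ⁻¹ • (-ν t + F (ν t) t)) (Set.Ici 0) t) :
    (∀ t ∈ Set.Ici (0 : ℝ),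
      ‖ν t‖ ≤ Real.exp (-t / τ) * ‖ν 0‖ +
        (1 - Real.exp (-t / τ)) * M * Real.sqrt (volume D).toReal) ∧
    (∀ t ∈ Set.Ici (0 : ℝ),
      ‖ν t‖ ≤ max ‖ν 0‖ (M * Real.sqrt (volume D).toReal)) :=
  wilson_cowan_a_priori_bound_general D hDbdd f M hfBdd w I F hF τ hτ ν hν
end
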